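/- arXiv:math/0010079 — 2 statements merged into one kernel-verified Lean document; each statement's English description precedes it below -/
import Mathlib

section
/- Let q be a nonzero imaginary quaternion and U a finite-dimensional AH-module. Then the quaternionic tensor product U ⊗_ℍ X_q is AH-isomorphic to a direct sum of n copies of X_q for some integer n ≥ 0. -/
open Module

local notation "ℍ" => Quaternion ℝ

noncomputable section

/-- The imaginary quaternions, as a real subspace of `ℍ`. -/
def ImH : Submodule ℝ ℍ where
  carrier := {x | x.re = 0}
  add_mem' := by
    intro a b ha hb
    simp only [Set.mem_setOf_eq] at *
    simp [ha, hb]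
  zero_mem' := by simp [Quaternion.re_zero]
  smul_mem' := by
    intro c x hx
    simp only [Set.mem_setOf_eq] at *
    simp [hx]

variable {U : Type*} [AddCommGroup U] [Module ℝ U] [Module ℍ U]
variable {V : Type*} [AddCommGroup V] [Module ℝ V] [Module ℍ V]
variable {W : Type*} [AddCommGroup W] [Module ℝ W] [Module ℍ W]
variable {X : Type*} [AddCommGroup X] [Module ℝ X] [Module ℍ X]

/-- `U^†`: the real subspace of those real-linear maps `U → ℍ` that are `ℍ`-linear
and map the distinguished subspace `U'` into the imaginary quaternions. -/
def AHDual (U' : Submodule ℝ U) : Submodule ℝ (U →ₗ[ℝ] ℍ) where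
  carrier := {α | (∀ (c : ℍ) (u : U), α (c • u) = c * α u) ∧ ∀ u ∈ U', (α u).re = 0}
  zero_mem' := ⟨fun c u => by simp, fun u hu => by simp [Quaternion.re_zero]⟩
  add_mem' := by
    rintro a b ⟨ha1, ha2⟩ ⟨hb1, hb2⟩
    exact ⟨fun c u => by simp [ha1 c u, hb1 c u, mul_add],
           fun u hu => by simp [ha2 u hu, hb2 u hu]⟩
  smul_mem' := by
    rintro r α ⟨h1, h2⟩
    refine ⟨fun c u => ?_, fun u hu => ?_⟩
    · simp [h1 c u, mul_smul_comm]
    · simp [h2 u hu]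

/-- The AH-module condition: `U^†` separates points of `U`. -/
def IsAH (U' : Submodule ℝ U) : Prop :=
  ∀ u : U, (∀ α : U →ₗ[ℝ] ℍ, α ∈ AHDual U' → α u = 0) → u = 0

/-- The map `ι_U : U → ((U^†) →ₗ ℍ)`, `ι_U(u)(α) = α(u)`. -/
def iotaAH (U' : Submodule ℝ U) : U →ₗ[ℝ] (↥(AHDual U') →ₗ[ℝ] ℍ) where
  toFun u :=
    { toFun := fun α => (α : U →ₗ[ℝ] ℍ) u
      map_add' := fun a b => rfl
      map_smul' := fun r a => rfl }
  map_add' := fun u v => LinearMap.ext fun α => by simp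
  map_smul' := fun r u => LinearMap.ext fun α => by simp

@[simp] theorem iotaAH_apply (U' : Submodule ℝ U) (u : U) (α : ↥(AHDual U')) :
    iotaAH U' u α = (α : U →ₗ[ℝ] ℍ) u := rfl

/-- The quaternionic tensor product `U ⊗_ℍ V`, realised as the subspace of real-bilinear
maps `U^† × V^† → ℍ` all of whose slices lie in `ι_U(U)` resp. `ι_V(V)`. -/
def QTP (U' : Submodule ℝ U) (V' : Submodule ℝ V) :
    Submodule ℝ (↥(AHDual U') →ₗ[ℝ] ↥(AHDual V') →ₗ[ℝ] ℍ) where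
  carrier := {B | (∀ β, ∃ u : U, ∀ α, B α β = iotaAH U' u α) ∧
                  (∀ α, ∃ v : V, ∀ β, B α β = iotaAH V' v β)}
  zero_mem' :=
    ⟨fun β => ⟨0, fun α => by simp⟩, fun α => ⟨0, fun β => by simp⟩⟩
  add_mem' := by
    rintro B C ⟨hB1, hB2⟩ ⟨hC1, hC2⟩
    refine ⟨fun β => ?_, fun α => ?_⟩
    · obtain ⟨u, hu⟩ := hB1 β; obtain ⟨u', hu'⟩ := hC1 β
      exact ⟨u + u', fun α => by simp [hu α, hu' α]⟩
    · obtain ⟨v, hv⟩ := hB2 α; obtain ⟨v', hv'⟩ := hC2 α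
      exact ⟨v + v', fun β => by simp [hv β, hv' β]⟩
  smul_mem' := by
    rintro r B ⟨h1, h2⟩
    refine ⟨fun β => ?_, fun α => ?_⟩
    · obtain ⟨u, hu⟩ := h1 β; exact ⟨r • u, fun α => by simp [hu α]⟩
    · obtain ⟨v, hv⟩ := h2 α; exact ⟨r • v, fun β => by simp [hv β]⟩

/-- The left action of a quaternion `c` on the ambient space of `U ⊗_ℍ V`. -/
def hsmulBil (U' : Submodule ℝ U) (V' : Submodule ℝ V) (c : ℍ) :
    (↥(AHDual U') →ₗ[ℝ] ↥(AHDual V') →ₗ[ℝ] ℍ) →ₗ[ℝ]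
      (↥(AHDual U') →ₗ[ℝ] ↥(AHDual V') →ₗ[ℝ] ℍ) where
  toFun B :=
    { toFun := fun α =>
        { toFun := fun β => c * B α β
          map_add' := fun b b' => by simp [mul_add]
          map_smul' := fun r b => by simp [mul_smul_comm] }
      map_add' := fun a a' => LinearMap.ext fun β => by simp [mul_add]
      map_smul' := fun r a => LinearMap.ext fun β => by simp [mul_smul_comm] }
  map_add' := fun B B' => LinearMap.ext fun α => LinearMap.ext fun β => by simp [mul_add]
  map_smul' := fun r B => LinearMap.ext fun α => LinearMap.ext fun β => by simp [mul_smul_comm]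

@[simp] theorem hsmulBil_apply (U' : Submodule ℝ U) (V' : Submodule ℝ V) (c : ℍ)
    (B : ↥(AHDual U') →ₗ[ℝ] ↥(AHDual V') →ₗ[ℝ] ℍ) (α : ↥(AHDual U')) (β : ↥(AHDual V')) :
    hsmulBil U' V' c B α β = c * B α β := rfl

theorem hsmulBil_mem {U' : Submodule ℝ U} {V' : Submodule ℝ V} (c : ℍ)
    {B : ↥(AHDual U') →ₗ[ℝ] ↥(AHDual V') →ₗ[ℝ] ℍ} (hB : B ∈ QTP U' V') :
    hsmulBil U' V' c B ∈ QTP U' V' := by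
  obtain ⟨h1, h2⟩ := hB
  constructor
  · intro β
    obtain ⟨u, hu⟩ := h1 β
    refine ⟨c • u, fun α => ?_⟩
    have hα : (α : U →ₗ[ℝ] ℍ) (c • u) = c * (α : U →ₗ[ℝ] ℍ) u := α.2.1 c u
    rw [hsmulBil_apply, hu α, iotaAH_apply, iotaAH_apply, hα]
  · intro α
    obtain ⟨v, hv⟩ := h2 α
    refine ⟨c • v, fun β => ?_⟩
    have hβ : (β : V →ₗ[ℝ] ℍ) (c • v) = c * (β : V →ₗ[ℝ] ℍ) v := β.2.1 c v
    rw [hsmulBil_apply, hv β, iotaAH_apply, iotaAH_apply, hβ]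

/-- The primed part of `U ⊗_ℍ V` (the intersection with `𝕀 ⊗ (U^†)^* ⊗ (V^†)^*`). -/
def QTPprimeSet (U' : Submodule ℝ U) (V' : Submodule ℝ V) : Set ↥(QTP U' V') :=
  {x | ∀ (α : ↥(AHDual U')) (β : ↥(AHDual V')),
    (((x : ↥(AHDual U') →ₗ[ℝ] ↥(AHDual V') →ₗ[ℝ] ℍ)) α β).re = 0}

/-- `X_q'`: the real subspace of quaternions anticommuting with `q`. -/
def XqP (q : ℍ) : Submodule ℝ ℍ where
  carrier := {p | p * q = -(q * p)}
  zero_mem' := by simp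
  add_mem' := by
    intro a b ha hb
    simp only [Set.mem_setOf_eq] at *
    rw [add_mul, mul_add, ha, hb, neg_add]
  smul_mem' := by
    intro r p hp
    simp only [Set.mem_setOf_eq] at *
    rw [smul_mul_assoc, hp, mul_smul_comm, smul_neg]

theorem XqP_le_im {q : ℍ} (hq : q.re = 0) (hq0 : q ≠ 0) :
    ∀ p ∈ XqP q, p.re = 0 := by
  intro p hp
  have h : p * q + q * p = 0 := by
    have h' : p * q = -(q * p) := hp
    rw [h', neg_add_cancel]
  have e1 : p.re * q.imI = 0 := by
    have := congrArg QuaternionAlgebra.imI h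
    simp only [Quaternion.imI_add, Quaternion.imI_mul, Quaternion.imI_zero, hq] at this
    linarith
  have e2 : p.re * q.imJ = 0 := by
    have := congrArg QuaternionAlgebra.imJ h
    simp only [Quaternion.imJ_add, Quaternion.imJ_mul, Quaternion.imJ_zero, hq] at this
    linarith
  have e3 : p.re * q.imK = 0 := by
    have := congrArg QuaternionAlgebra.imK h
    simp only [Quaternion.imK_add, Quaternion.imK_mul, Quaternion.imK_zero, hq] at this
    linarith
  by_contra hpre
  apply hq0
  ext
  · exact hq
  · exact (mul_eq_zero.mp e1).resolve_left hpre
  · exact (mul_eq_zero.mp e2).resolve_left hpre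
  · exact (mul_eq_zero.mp e3).resolve_left hpre

open Classical in
/-- The identity map `ℍ → ℍ`, as an element of `(X_q)^†` (junk value if `q` is not
a nonzero imaginary quaternion). -/
def idXqDual (q : ℍ) : ↥(AHDual (XqP q)) :=
  if h : q.re = 0 ∧ q ≠ 0 then
    ⟨(LinearMap.id : ℍ →ₗ[ℝ] ℍ),
      ⟨fun c u => by simp [smul_eq_mul], fun u hu => XqP_le_im h.1 h.2 u hu⟩⟩
  else 0

/-- The image of `id ⊗_ℍ χ_q : U ⊗_ℍ X_q → U` inside `U`. -/
def chiImage (U' : Submodule ℝ U) (q : ℍ) : Set U :=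
  {u | ∃ B ∈ QTP U' (XqP q), ∀ α : ↥(AHDual U'), B α (idXqDual q) = iotaAH U' u α}

/-- A (finite-dimensional) AH-module is semistable if it is generated as an `ℍ`-module by
the images of the maps `id ⊗_ℍ χ_q` over all nonzero imaginary `q`. -/
def Semistable (U' : Submodule ℝ U) : Prop :=
  Submodule.span ℍ (⋃ q ∈ {q : ℍ | q.re = 0 ∧ q ≠ 0}, chiImage U' q) = ⊤

/-- `U ⊗_ℍ X_q` is AH-isomorphic to the direct sum of `n` copies of `X_q`. -/
def AHIsoNXq (U' : Submodule ℝ U) (q : ℍ) (n : ℕ) : Prop :=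
  ∃ e : ↥(QTP U' (XqP q)) ≃ₗ[ℝ] (Fin n → ℍ),
    (∀ (c : ℍ) (x : ↥(QTP U' (XqP q))),
      e ⟨hsmulBil U' (XqP q) c ↑x, hsmulBil_mem c x.2⟩ = c • e x) ∧
    ((fun x => e x) '' QTPprimeSet U' (XqP q) = {f : Fin n → ℍ | ∀ i, f i ∈ XqP q})

/-- A stable AH-module with virtual dimension `r`. -/
def Stable (U' : Submodule ℝ U) (r : ℕ) : Prop :=
  Semistable U' ∧ ∀ q : ℍ, q.re = 0 → q ≠ 0 → AHIsoNXq U' q r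

/-- A stable AH-module (existentially quantified virtual dimension). -/
def IsStable (U' : Submodule ℝ U) : Prop :=
  Semistable U' ∧ ∃ j r : ℕ, finrank ℝ U = 4 * j ∧ finrank ℝ ↥U' = 2 * j + r ∧
    ∀ q : ℍ, q.re = 0 → q ≠ 0 → AHIsoNXq U' q r

/-- The dual `φ^× : V^† → U^†` of an AH-morphism `φ : U → V`. -/
def dualPull (U' : Submodule ℝ U) (V' : Submodule ℝ V) (φ : U →ₗ[ℝ] V)
    (hφH : ∀ (c : ℍ) (u : U), φ (c • u) = c • φ u) (hφ' : ∀ u ∈ U', φ u ∈ V') :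
    ↥(AHDual V') →ₗ[ℝ] ↥(AHDual U') where
  toFun γ := ⟨(γ : V →ₗ[ℝ] ℍ).comp φ,
    ⟨fun c u => by simp [hφH c u, γ.2.1], fun u hu => γ.2.2 _ (hφ' u hu)⟩⟩
  map_add' := fun a b => Subtype.ext (LinearMap.ext fun u => by simp)
  map_smul' := fun r a => Subtype.ext (LinearMap.ext fun u => by simp)


/-! Write `U₊`, `U₋` for the vectors on which every `α ∈ U^†` takes values commuting, resp.
anticommuting, with `q`. Since `X_q'` is the orthogonal complement of `span {1, q}` in `ℍ`,
`X_q^† ≅ span {1, q}` via `β ↦ β 1`; evaluating at `β = id` and `β = (· * q)` then shows that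
`u ↦ u ⊗ 1` maps `U₊ ⊕ U₋` onto `U ⊗_ℍ X_q`, with primed part the image of `U₋`. The AH condition
makes this injective and gives `U₊ ∩ U₋ = 0`, while multiplication by a nonzero `p ∈ X_q'` swaps
`U₊` and `U₋`. So for an `ℍ`-basis `v₁, …, vₙ` of `ℍ U₊` taken inside `U₊`, the map
`c ↦ ∑ cᵢ vᵢ` is an `ℍ`-isomorphism `ℍⁿ ≅ U₊ ⊕ U₋` carrying `(X_q')ⁿ` onto `U₋`. -/

section Quaternion

variable {q : ℍ}

theorem mul_add_mul_eq_re_of_re_eq_zero {x : ℍ} (hx : x.re = 0) (hq : q.re = 0) :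
    x * q + q * x = ((2 * (x * q).re : ℝ) : ℍ) := by
  have hstar : star (x * q) = q * x := by
    rw [star_mul, Quaternion.star_eq_neg.2 hq, Quaternion.star_eq_neg.2 hx, neg_mul_neg]
  rw [← hstar, Quaternion.self_add_star']

theorem mem_XqP_iff (hq : q.re = 0) (hq0 : q ≠ 0) {x : ℍ} :
    x ∈ XqP q ↔ x.re = 0 ∧ (x * q).re = 0 := by
  change x * q = -(q * x) ↔ _
  constructor
  · intro h
    have hx : x.re = 0 := XqP_le_im hq hq0 x h
    have hsum := mul_add_mul_eq_re_of_re_eq_zero hx hq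
    rw [eq_neg_iff_add_eq_zero.1 h, ← Quaternion.coe_zero, Quaternion.coe_inj] at hsum
    exact ⟨hx, by linarith⟩
  · rintro ⟨hx, hxq⟩
    have hsum := mul_add_mul_eq_re_of_re_eq_zero hx hq
    rw [hxq, mul_zero, Quaternion.coe_zero] at hsum
    exact eq_neg_of_add_eq_zero_left hsum

theorem XqP_eq_orthogonal (hq : q.re = 0) (hq0 : q ≠ 0) :
    XqP q = (Submodule.span ℝ {1, q})ᗮ := by
  ext x
  rw [mem_XqP_iff hq hq0, Submodule.span_insert, ← Submodule.inf_orthogonal, Submodule.mem_inf,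
    Submodule.mem_orthogonal_singleton_iff_inner_right,
    Submodule.mem_orthogonal_singleton_iff_inner_right, Quaternion.inner_def,
    Quaternion.inner_def]
  simp only [one_mul, Quaternion.re_star, Quaternion.re_mul, Quaternion.imI_star,
    Quaternion.imJ_star, Quaternion.imK_star, hq]
  constructor <;> rintro ⟨h1, h2⟩ <;> constructor <;> linarith

theorem exists_ne_zero_mem_XqP (hq : q.re = 0) (hq0 : q ≠ 0) : ∃ p ∈ XqP q, p ≠ 0 := by
  classical
  apply Submodule.exists_mem_ne_zero_of_ne_bot
  intro hbot
  have hsum := (Submodule.span ℝ ({1, q} : Set ℍ)).finrank_add_finrank_orthogonal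
  rw [← XqP_eq_orthogonal hq hq0, hbot, finrank_bot, Quaternion.finrank_eq_four] at hsum
  have hle := finrank_span_le_card (R := ℝ) ({1, q} : Set ℍ)
  have hcard := Finset.card_le_two (a := (1 : ℍ)) (b := q)
  simp only [Set.toFinset_insert, Set.toFinset_singleton] at hle
  omega

theorem re_mul_eq_neg_inner {x : ℍ} (hx : x.re = 0) (p : ℍ) : (x * p).re = -inner ℝ x p := by
  rw [Quaternion.inner_def]
  simp only [Quaternion.re_mul, Quaternion.re_star, Quaternion.imI_star, Quaternion.imJ_star,
    Quaternion.imK_star, hx]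
  ring

theorem mem_span_pair_one_of_forall_re_mul_eq_zero (hq : q.re = 0) (hq0 : q ≠ 0) {p : ℍ}
    (hp : ∀ x ∈ XqP q, (x * p).re = 0) : p ∈ Submodule.span ℝ {1, q} := by
  rw [← Submodule.orthogonal_orthogonal (Submodule.span ℝ {1, q}), ← XqP_eq_orthogonal hq hq0,
    Submodule.mem_orthogonal]
  intro x hx
  have h := hp x hx
  rw [re_mul_eq_neg_inner (XqP_le_im hq hq0 x hx), neg_eq_zero] at h
  exact h

theorem inv_mul_mul_mul_self (hq : q.re = 0) (hq0 : q ≠ 0) (c : ℍ) :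
    q⁻¹ * c * q * q = q * c := by
  have hsq : q * q = -((Quaternion.normSq q : ℝ) : ℍ) := by
    rw [← Quaternion.self_mul_star, Quaternion.star_eq_neg.2 hq, mul_neg, neg_neg]
  calc q⁻¹ * c * q * q = q⁻¹ * (c * (q * q)) := by noncomm_ring
    _ = q⁻¹ * (q * (q * c)) := by
      rw [← mul_assoc q q c, hsq, neg_mul, mul_neg, Quaternion.coe_commutes]
    _ = q * c := inv_mul_cancel_left₀ hq0 _

theorem mul_inv_mul_mul (hq0 : q ≠ 0) (c : ℍ) : q * (q⁻¹ * c * q) = c * q := by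
  rw [mul_assoc, mul_inv_cancel_left₀ hq0]

theorem commute_add_inv_mul_mul (hq : q.re = 0) (hq0 : q ≠ 0) (c : ℍ) :
    Commute q (c + q⁻¹ * c * q) := by
  change q * _ = _ * q
  rw [mul_add, add_mul, inv_mul_mul_mul_self hq hq0, mul_inv_mul_mul hq0, add_comm]

theorem sub_inv_mul_mul_mem_XqP (hq : q.re = 0) (hq0 : q ≠ 0) (c : ℍ) :
    c - q⁻¹ * c * q ∈ XqP q := by
  change _ * q = -(q * _)
  rw [sub_mul, mul_sub, inv_mul_mul_mul_self hq hq0, mul_inv_mul_mul hq0, neg_sub]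

end Quaternion

theorem AHDual_apply_smul {U' : Submodule ℝ U} (α : AHDual U') (c : ℍ) (u : U) :
    α.1 (c • u) = c * α.1 u :=
  α.2.1 c u

theorem AHDual_XqP_apply {q : ℍ} (β : AHDual (XqP q)) (x : ℍ) : β.1 x = x * β.1 1 := by
  rw [← AHDual_apply_smul, smul_eq_mul, mul_one]

theorem AHDual_XqP_apply_one_mem_span {q : ℍ} (hq : q.re = 0) (hq0 : q ≠ 0)
    (β : AHDual (XqP q)) : β.1 1 ∈ Submodule.span ℝ {1, q} :=
  mem_span_pair_one_of_forall_re_mul_eq_zero hq hq0 fun x hx => by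
    rw [← AHDual_XqP_apply]; exact β.2.2 x hx

theorem idXqDual_apply {q : ℍ} (hq : q.re = 0) (hq0 : q ≠ 0) (x : ℍ) :
    (idXqDual q).1 x = x := by
  rw [idXqDual, dif_pos ⟨hq, hq0⟩]
  rfl

theorem mulRight_mem_AHDual_XqP {q : ℍ} (hq : q.re = 0) (hq0 : q ≠ 0) :
    LinearMap.mulRight ℝ q ∈ AHDual (XqP q) :=
  ⟨fun c x => mul_assoc c x q, fun _ hx => ((mem_XqP_iff hq hq0).1 hx).2⟩

section CommSubspaces

variable (U' : Submodule ℝ U) (q : ℍ)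

def commSubspace : Submodule ℝ U :=
  ⨅ α : AHDual U', (Subalgebra.centralizer ℝ {q}).toSubmodule.comap α.1

def anticommSubspace : Submodule ℝ U :=
  ⨅ α : AHDual U', (XqP q).comap α.1

variable {U' q}

theorem mem_commSubspace {u : U} :
    u ∈ commSubspace U' q ↔ ∀ α : AHDual U', Commute q (α.1 u) := by
  simp [commSubspace, Submodule.mem_iInf, Subalgebra.mem_centralizer_iff, Commute, SemiconjBy]

theorem mem_anticommSubspace {u : U} :
    u ∈ anticommSubspace U' q ↔ ∀ α : AHDual U', α.1 u ∈ XqP q := by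
  simp [anticommSubspace, Submodule.mem_iInf]

theorem smul_mem_commSubspace {c : ℍ} (hc : Commute q c) {u : U} (hu : u ∈ commSubspace U' q) :
    c • u ∈ commSubspace U' q :=
  mem_commSubspace.2 fun α => by
    rw [AHDual_apply_smul]; exact hc.mul_right (mem_commSubspace.1 hu α)

theorem smul_mem_anticommSubspace {c : ℍ} (hc : c ∈ XqP q) {u : U}
    (hu : u ∈ commSubspace U' q) : c • u ∈ anticommSubspace U' q :=
  mem_anticommSubspace.2 fun α => by
    have hc : c * q = -(q * c) := hc
    change _ * q = -(q * _)
    rw [AHDual_apply_smul, mul_assoc, ← (mem_commSubspace.1 hu α).eq, ← mul_assoc, hc, neg_mul,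
      mul_assoc]

theorem smul_mem_commSubspace_of_mem_anticommSubspace {c : ℍ} (hc : c ∈ XqP q) {u : U}
    (hu : u ∈ anticommSubspace U' q) : c • u ∈ commSubspace U' q :=
  mem_commSubspace.2 fun α => by
    have hc : c * q = -(q * c) := hc
    have hu : α.1 u * q = -(q * α.1 u) := mem_anticommSubspace.1 hu α
    have hc' : q * c = -(c * q) := by rw [hc, neg_neg]
    have hu' : q * α.1 u = -(α.1 u * q) := by rw [hu, neg_neg]
    change q * _ = _ * q
    rw [AHDual_apply_smul, ← mul_assoc, hc', neg_mul, mul_assoc, hu', mul_neg, neg_neg,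
      mul_assoc]

theorem commSubspace_inf_anticommSubspace (hAH : IsAH U') (hq0 : q ≠ 0) :
    commSubspace U' q ⊓ anticommSubspace U' q = ⊥ := by
  refine eq_bot_iff.2 fun u hu => hAH u fun α hα => ?_
  obtain ⟨hcomm, hanti⟩ := Submodule.mem_inf.1 hu
  have h1 : q * α u = α u * q := mem_commSubspace.1 hcomm ⟨α, hα⟩
  have h2 : α u * q = -(q * α u) := mem_anticommSubspace.1 hanti ⟨α, hα⟩
  have h3 : (2 : ℝ) • (q * α u) = 0 := by
    rw [two_smul]
    nth_rw 1 [h1, h2]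
    exact neg_add_cancel _
  exact (mul_eq_zero.1 ((smul_eq_zero.1 h3).resolve_left two_ne_zero)).resolve_left hq0

end CommSubspaces

section TensorWithXq

variable {U' : Submodule ℝ U} {q : ℍ}

theorem mem_commSubspace_sup_anticommSubspace (hq : q.re = 0) (hq0 : q ≠ 0) {u w : U}
    (hw : ∀ α : AHDual U', α.1 u * q = α.1 w) :
    u ∈ commSubspace U' q ⊔ anticommSubspace U' q := by
  have hconj : ∀ α : AHDual U', α.1 (q⁻¹ • w) = q⁻¹ * α.1 u * q := fun α => by
    rw [AHDual_apply_smul, ← hw, mul_assoc]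
  have hplus : u + q⁻¹ • w ∈ commSubspace U' q := mem_commSubspace.2 fun α => by
    rw [map_add, hconj]; exact commute_add_inv_mul_mul hq hq0 _
  have hminus : u - q⁻¹ • w ∈ anticommSubspace U' q := mem_anticommSubspace.2 fun α => by
    rw [map_sub, hconj]; exact sub_inv_mul_mul_mem_XqP hq hq0 _
  have h2 : (2 : ℝ) • u = (u + q⁻¹ • w) + (u - q⁻¹ • w) := by rw [two_smul, add_add_sub_cancel]
  exact (Submodule.smul_mem_iff _ two_ne_zero).1 (h2 ▸ Submodule.add_mem_sup hplus hminus)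

variable (U' q) in
/-- The bilinear map representing `u ⊗ 1` in `U ⊗_ℍ X_q`. -/
def xqBilin : U →ₗ[ℝ] AHDual U' →ₗ[ℝ] AHDual (XqP q) →ₗ[ℝ] ℍ where
  toFun u := (LinearMap.mul ℝ ℍ).compl₁₂ (iotaAH U' u) (iotaAH (XqP q) 1)
  map_add' u v := LinearMap.ext₂ fun α β => by simp
  map_smul' r u := LinearMap.ext₂ fun α β => by simp

theorem xqBilin_apply (u : U) (α : AHDual U') (β : AHDual (XqP q)) :
    xqBilin U' q u α β = α.1 u * β.1 1 :=
  rfl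

theorem xqBilin_mem_QTP (hq : q.re = 0) (hq0 : q ≠ 0) {u w : U}
    (hw : ∀ α : AHDual U', α.1 u * q = α.1 w) : xqBilin U' q u ∈ QTP U' (XqP q) := by
  refine ⟨fun β => ?_, fun α => ⟨α.1 u, fun β => (AHDual_XqP_apply β _).symm⟩⟩
  obtain ⟨s, t, hst⟩ := Submodule.mem_span_pair.1 (AHDual_XqP_apply_one_mem_span hq hq0 β)
  refine ⟨s • u + t • w, fun α => ?_⟩
  rw [xqBilin_apply, iotaAH_apply, ← hst, map_add, map_smul, map_smul, ← hw, mul_add,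
    mul_smul_comm, mul_one, mul_smul_comm]

theorem exists_xqBilin_eq_of_mem_QTP (hq : q.re = 0) (hq0 : q ≠ 0)
    {B : AHDual U' →ₗ[ℝ] AHDual (XqP q) →ₗ[ℝ] ℍ} (hB : B ∈ QTP U' (XqP q)) :
    ∃ u w : U, (∀ α : AHDual U', α.1 u * q = α.1 w) ∧ xqBilin U' q u = B := by
  let ρ : AHDual (XqP q) := ⟨_, mulRight_mem_AHDual_XqP hq hq0⟩
  obtain ⟨u, hu⟩ := hB.1 (idXqDual q)
  obtain ⟨w, hw⟩ := hB.1 ρ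
  have hB_eq : ∀ α β, B α β = α.1 u * β.1 1 := fun α β => by
    obtain ⟨x, hx⟩ := hB.2 α
    have hx1 := hx (idXqDual q)
    rw [iotaAH_apply, idXqDual_apply hq hq0] at hx1
    rw [hx β, iotaAH_apply, AHDual_XqP_apply, ← hx1, hu, iotaAH_apply]
  refine ⟨u, w, fun α => ?_, LinearMap.ext₂ fun α β => (hB_eq α β).symm⟩
  simpa [ρ] using (hB_eq α ρ).symm.trans (hw α)

theorem QTP_XqP_eq_map (hq : q.re = 0) (hq0 : q ≠ 0) :
    QTP U' (XqP q) = (commSubspace U' q ⊔ anticommSubspace U' q).map (xqBilin U' q) := by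
  apply le_antisymm
  · intro B hB
    obtain ⟨u, w, hw, rfl⟩ := exists_xqBilin_eq_of_mem_QTP hq hq0 hB
    exact Submodule.mem_map_of_mem (mem_commSubspace_sup_anticommSubspace hq hq0 hw)
  · rw [Submodule.map_le_iff_le_comap]
    refine sup_le (fun u hu => xqBilin_mem_QTP hq hq0 (w := q • u) fun α => ?_)
      (fun u hu => xqBilin_mem_QTP hq hq0 (w := -(q • u)) fun α => ?_)
    · rw [AHDual_apply_smul]
      exact (mem_commSubspace.1 hu α).eq.symm
    · rw [map_neg, AHDual_apply_smul]
      exact mem_anticommSubspace.1 hu α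

theorem xqBilin_injective (hAH : IsAH U') (hq : q.re = 0) (hq0 : q ≠ 0) :
    Function.Injective (xqBilin U' q) := by
  refine (injective_iff_map_eq_zero _).2 fun u hu => hAH u fun α hα => ?_
  have h := LinearMap.congr_fun₂ hu ⟨α, hα⟩ (idXqDual q)
  rwa [xqBilin_apply, idXqDual_apply hq hq0, mul_one] at h

theorem forall_re_xqBilin_eq_zero_iff (hq : q.re = 0) (hq0 : q ≠ 0) {u : U} :
    (∀ α β, (xqBilin U' q u α β).re = 0) ↔ u ∈ anticommSubspace U' q := by
  rw [mem_anticommSubspace]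
  refine ⟨fun h α => (mem_XqP_iff hq hq0).2 ⟨?_, ?_⟩, fun h α β => ?_⟩
  · simpa [xqBilin_apply, idXqDual_apply hq hq0] using h α (idXqDual q)
  · simpa only [xqBilin_apply, LinearMap.mulRight_apply, one_mul] using
      h α ⟨_, mulRight_mem_AHDual_XqP hq hq0⟩
  · rw [xqBilin_apply, ← AHDual_XqP_apply]
    exact β.2.2 _ (h α)

theorem hsmulBil_xqBilin (c : ℍ) (u : U) :
    hsmulBil U' (XqP q) c (xqBilin U' q u) = xqBilin U' q (c • u) :=
  LinearMap.ext₂ fun α β => by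
    rw [hsmulBil_apply, xqBilin_apply, xqBilin_apply, AHDual_apply_smul, mul_assoc]

end TensorWithXq

theorem exists_linearIndependent_fin (K : Type*) {M : Type*} [DivisionRing K] [AddCommGroup M]
    [Module K M] [Module.Finite K M] (s : Set M) :
    ∃ (n : ℕ) (v : Fin n → M), (∀ i, v i ∈ s) ∧ LinearIndependent K v ∧
      Submodule.span K (Set.range v) = Submodule.span K s := by
  obtain ⟨b, hbs, hspan, hli⟩ := exists_linearIndependent K s
  have : Finite b := hli.finite
  let e := Finite.equivFin b
  refine ⟨_, Subtype.val ∘ e.symm, fun i => hbs (e.symm i).2, hli.comp _ e.symm.injective, ?_⟩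
  rw [Set.range_comp, e.symm.range_eq_univ, Set.image_univ, Subtype.range_coe, hspan]

section LinearCombination

variable {U' : Submodule ℝ U} {q : ℍ} {ι : Type*} [Fintype ι] {v : ι → U}

theorem linearCombination_mem_commSubspace (hv : ∀ i, v i ∈ commSubspace U' q) {c : ι → ℍ}
    (hc : ∀ i, Commute q (c i)) : Fintype.linearCombination ℍ v c ∈ commSubspace U' q := by
  rw [Fintype.linearCombination_apply]
  exact Submodule.sum_mem _ fun i _ => smul_mem_commSubspace (hc i) (hv i)

theorem linearCombination_mem_anticommSubspace (hv : ∀ i, v i ∈ commSubspace U' q)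
    {c : ι → ℍ} (hc : ∀ i, c i ∈ XqP q) :
    Fintype.linearCombination ℍ v c ∈ anticommSubspace U' q := by
  rw [Fintype.linearCombination_apply]
  exact Submodule.sum_mem _ fun i _ => smul_mem_anticommSubspace (hc i) (hv i)

theorem linearCombination_add_self {M : Type*} [AddCommGroup M] [Module ℍ M] (w : ι → M)
    (c : ι → ℍ) :
    Fintype.linearCombination ℍ w c + Fintype.linearCombination ℍ w c =
      Fintype.linearCombination ℍ w (fun i => c i + q⁻¹ * c i * q) +
        Fintype.linearCombination ℍ w (fun i => c i - q⁻¹ * c i * q) := by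
  rw [← map_add, ← map_add]
  congr 1
  ext1 i
  exact (add_add_sub_cancel _ _ _).symm

theorem linearCombination_mem_sup (hq : q.re = 0) (hq0 : q ≠ 0)
    (hv : ∀ i, v i ∈ commSubspace U' q) (c : ι → ℍ) :
    Fintype.linearCombination ℍ v c ∈ commSubspace U' q ⊔ anticommSubspace U' q := by
  have h2 := Submodule.add_mem_sup
    (linearCombination_mem_commSubspace hv fun i => commute_add_inv_mul_mul hq hq0 (c i))
    (linearCombination_mem_anticommSubspace hv fun i => sub_inv_mul_mul_mem_XqP hq hq0 (c i))
  rw [← linearCombination_add_self, ← two_smul ℝ] at h2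
  exact (Submodule.smul_mem_iff _ two_ne_zero).1 h2

theorem linearCombination_mem_anticommSubspace_iff (hAH : IsAH U') (hq : q.re = 0)
    (hq0 : q ≠ 0) (hv : ∀ i, v i ∈ commSubspace U' q) (hli : LinearIndependent ℍ v)
    {c : ι → ℍ} :
    Fintype.linearCombination ℍ v c ∈ anticommSubspace U' q ↔ ∀ i, c i ∈ XqP q := by
  refine ⟨fun hc i => ?_, linearCombination_mem_anticommSubspace hv⟩
  set a : ι → ℍ := fun i => c i + q⁻¹ * c i * q
  have ha_comm : Fintype.linearCombination ℍ v a ∈ commSubspace U' q :=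
    linearCombination_mem_commSubspace hv fun i => commute_add_inv_mul_mul hq hq0 (c i)
  have ha_anti : Fintype.linearCombination ℍ v a ∈ anticommSubspace U' q := by
    rw [eq_sub_of_add_eq (linearCombination_add_self v c).symm]
    exact sub_mem (add_mem hc hc)
      (linearCombination_mem_anticommSubspace hv fun i => sub_inv_mul_mul_mem_XqP hq hq0 (c i))
  have ha : a = 0 := hli.fintypeLinearCombination_injective <| by
    rw [map_zero, ← Submodule.mem_bot ℝ, ← commSubspace_inf_anticommSubspace hAH hq0]
    exact Submodule.mem_inf.2 ⟨ha_comm, ha_anti⟩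
  have hconj : q⁻¹ * c i * q = -c i := eq_neg_of_add_eq_zero_right (congrFun ha i)
  have h2 := sub_inv_mul_mul_mem_XqP hq hq0 (c i)
  rw [hconj, sub_neg_eq_add, ← two_smul ℝ] at h2
  exact (Submodule.smul_mem_iff _ two_ne_zero).1 h2

end LinearCombination

theorem sup_subset_span_commSubspace {U' : Submodule ℝ U} {q : ℍ} (hq : q.re = 0)
    (hq0 : q ≠ 0) :
    ((commSubspace U' q ⊔ anticommSubspace U' q : Submodule ℝ U) : Set U) ⊆
      Submodule.span ℍ (commSubspace U' q : Set U) := by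
  obtain ⟨p, hp, hp0⟩ := exists_ne_zero_mem_XqP hq hq0
  intro u hu
  obtain ⟨y, hy, z, hz, rfl⟩ := Submodule.mem_sup.1 hu
  refine add_mem (Submodule.subset_span hy) ?_
  rw [← inv_smul_smul₀ hp0 z]
  exact Submodule.smul_mem _ _
    (Submodule.subset_span (smul_mem_commSubspace_of_mem_anticommSubspace hp hz))

theorem AHIsoNXq_of_linearIndependent [IsScalarTower ℝ ℍ U] {U' : Submodule ℝ U} {q : ℍ}
    (hAH : IsAH U') (hq : q.re = 0) (hq0 : q ≠ 0) {n : ℕ} {v : Fin n → U}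
    (hv : ∀ i, v i ∈ commSubspace U' q) (hli : LinearIndependent ℍ v)
    (hspan : Submodule.span ℍ (Set.range v) = Submodule.span ℍ (commSubspace U' q : Set U)) :
    AHIsoNXq U' q n := by
  let L := (Fintype.linearCombination ℍ v).restrictScalars ℝ
  let G : (Fin n → ℍ) →ₗ[ℝ] QTP U' (XqP q) :=
    ((xqBilin U' q).comp L).codRestrict _ fun c => by
      rw [QTP_XqP_eq_map hq hq0]
      exact Submodule.mem_map_of_mem (linearCombination_mem_sup hq hq0 hv c)
  have hG : Function.Bijective G := by
    refine ⟨fun c d h => hli.fintypeLinearCombination_injective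
      (xqBilin_injective hAH hq hq0 (congrArg Subtype.val h)), ?_⟩
    rintro ⟨B, hB⟩
    rw [QTP_XqP_eq_map hq hq0] at hB
    obtain ⟨u, hu, rfl⟩ := hB
    obtain ⟨c, rfl⟩ : u ∈ LinearMap.range (Fintype.linearCombination ℍ v) := by
      rw [Fintype.range_linearCombination, hspan]
      exact sup_subset_span_commSubspace hq hq0 hu
    exact ⟨c, rfl⟩
  let e := LinearEquiv.ofBijective G hG
  refine ⟨e.symm, fun c x => ?_, ?_⟩
  · obtain ⟨d, rfl⟩ := e.surjective x
    rw [e.symm_apply_apply, LinearEquiv.symm_apply_eq]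
    apply Subtype.ext
    change hsmulBil U' (XqP q) c (xqBilin U' q (L d)) = xqBilin U' q (L (c • d))
    rw [hsmulBil_xqBilin]
    exact congrArg _ (map_smul (Fintype.linearCombination ℍ v) c d).symm
  · ext f
    change f ∈ ⇑e.symm '' _ ↔ _
    rw [LinearEquiv.image_symm_eq_preimage]
    change (∀ α β, (xqBilin U' q (L f) α β).re = 0) ↔ _
    rw [forall_re_xqBilin_eq_zero_iff hq hq0]
    exact linearCombination_mem_anticommSubspace_iff hAH hq hq0 hv hli

/-- For a nonzero imaginary quaternion `q` and a finite-dimensional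
AH-module `U`, the quaternionic tensor product `U ⊗_ℍ X_q` is AH-isomorphic to a direct
sum of `n` copies of `X_q`, for some `n ≥ 0`. -/
theorem qtp_with_xq_is_multiple_of_xq
    (U' : Submodule ℝ U) [IsScalarTower ℝ ℍ U] [FiniteDimensional ℝ U]
    (hAH : IsAH U') (q : ℍ) (hq : q.re = 0) (hq0 : q ≠ 0) :
    ∃ n : ℕ, AHIsoNXq U' q n := by
  have : Module.Finite ℍ U := .of_restrictScalars_finite ℝ ℍ U
  obtain ⟨n, v, hv, hli, hspan⟩ := exists_linearIndependent_fin ℍ (commSubspace U' q : Set U)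
  exact ⟨n, AHIsoNXq_of_linearIndependent hAH hq hq0 hv hli hspan⟩
end
end

section
/- Suppose 0 → U →^φ V →^ψ W → 0 is an AH-exact sequence of finite-dimensional AH-modules (exact as real vector spaces both on the modules and on the primed subspaces). Then the induced dual sequence 0 → W^† →^{ψ^×} V^† →^{φ^×} U^† → 0 is an exact sequence of real vector spaces. -/
open Module

local notation "ℍ" => Quaternion ℝ

noncomputable section

variable {U : Type*} [AddCommGroup U] [Module ℝ U] [Module ℍ U]
variable {V : Type*} [AddCommGroup V] [Module ℝ V] [Module ℍ V]
variable {W : Type*} [AddCommGroup W] [Module ℝ W] [Module ℍ W]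
variable {X : Type*} [AddCommGroup X] [Module ℝ X] [Module ℍ X]

/-! An `ℍ`-linear functional `α : V → ℍ` is determined by its real part, since
`re (c * α v) = re (α (c • v))` and the pairing `(c, x) ↦ re (c * x)` on `ℍ` is nondegenerate.
Conversely, once the real scalar action is the restriction of the quaternionic one (which the
AH condition forces), every real functional `g` is the real part of the `ℍ`-linear map
`v ↦ g v - g (i v) i - g (j v) j - g (k v) k`. So `V^†` is the space of real functionals vanishing
on `V'`, and surjectivity of `φ^×` amounts to extending a real functional along the injection
`U/U' → V/V'` provided by AH-exactness. Injectivity of `ψ^×` and exactness at `V^†` come from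
factoring functionals through the surjection `ψ`. -/

theorem Quaternion.eq_of_re_mul_eq {x y : ℍ} (h : ∀ c : ℍ, (c * x).re = (c * y).re) : x = y := by
  have h0 : (star (x - y) * (x - y)).re = 0 := by
    rw [mul_sub, Quaternion.re_sub, h, sub_self]
  rwa [Quaternion.star_mul_self, Quaternion.re_coe, Quaternion.normSq_eq_zero, sub_eq_zero] at h0

def quatI : ℍ := ⟨0, 1, 0, 0⟩
def quatJ : ℍ := ⟨0, 0, 1, 0⟩
def quatK : ℍ := ⟨0, 0, 0, 1⟩

theorem Quaternion.eq_re_add_imI_add_imJ_add_imK (c : ℍ) :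
    c = c.re • 1 + c.imI • quatI + c.imJ • quatJ + c.imK • quatK := by
  ext <;> simp [Quaternion.re_one, Quaternion.imI_one, Quaternion.imJ_one, Quaternion.imK_one] <;>
    simp [quatI, quatJ, quatK]

theorem IsAH.isScalarTower {V' : Submodule ℝ V} (hV : IsAH V') : IsScalarTower ℝ ℍ V := by
  refine ⟨fun r c v => ?_⟩
  rw [← sub_eq_zero]
  refine hV _ fun α hα => ?_
  rw [map_sub, hα.1, map_smul, hα.1, smul_mul_assoc, sub_self]

theorem AHDual.ext_re {U' : Submodule ℝ U} {α β : AHDual U'}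
    (h : ∀ u, ((α : U →ₗ[ℝ] ℍ) u).re = ((β : U →ₗ[ℝ] ℍ) u).re) : α = β := by
  refine Subtype.ext <| LinearMap.ext fun u => Quaternion.eq_of_re_mul_eq fun c => ?_
  rw [← α.2.1, ← β.2.1, h]

section QuaternionicExtension

variable [IsScalarTower ℝ ℍ V]

def quatExtend (g : V →ₗ[ℝ] ℝ) : V →ₗ[ℝ] ℍ :=
  g.smulRight 1 - (g ∘ₗ DistribSMul.toLinearMap ℝ V quatI).smulRight quatI
    - (g ∘ₗ DistribSMul.toLinearMap ℝ V quatJ).smulRight quatJ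
    - (g ∘ₗ DistribSMul.toLinearMap ℝ V quatK).smulRight quatK

theorem re_mul_quatExtend (g : V →ₗ[ℝ] ℝ) (c : ℍ) (v : V) :
    (c * quatExtend g v).re = g (c • v) := by
  conv_rhs => rw [c.eq_re_add_imI_add_imJ_add_imK]
  simp only [quatExtend, LinearMap.sub_apply, LinearMap.coe_smulRight, LinearMap.coe_comp,
    Function.comp_apply, DistribSMul.toLinearMap_apply, mul_sub, Algebra.mul_smul_comm, mul_one,
    Quaternion.re_sub, Quaternion.re_smul, smul_eq_mul, Quaternion.re_mul, add_smul, smul_assoc,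
    one_smul, map_add, map_smul]
  simp only [quatI, quatJ, quatK, mul_zero, mul_one, zero_sub, sub_zero, sub_neg_eq_add, sub_self]
  ring

theorem re_quatExtend (g : V →ₗ[ℝ] ℝ) (v : V) : (quatExtend g v).re = g v := by
  simpa using re_mul_quatExtend g 1 v

theorem quatExtend_smul (g : V →ₗ[ℝ] ℝ) (c : ℍ) (v : V) :
    quatExtend g (c • v) = c * quatExtend g v :=
  Quaternion.eq_of_re_mul_eq fun d => by
    rw [re_mul_quatExtend, ← mul_assoc, re_mul_quatExtend, mul_smul]

theorem quatExtend_mem_AHDual {V' : Submodule ℝ V} {g : V →ₗ[ℝ] ℝ} (hg : V' ≤ LinearMap.ker g) :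
    quatExtend g ∈ AHDual V' :=
  ⟨quatExtend_smul g, fun v hv => by rw [re_quatExtend]; exact hg hv⟩

end QuaternionicExtension

theorem Module.Dual.exists_comp_eq_of_comap_le {K M N : Type*} [Field K] [AddCommGroup M]
    [Module K M] [AddCommGroup N] [Module K N] {p : Submodule K M} {q : Submodule K N}
    {f : M →ₗ[K] N} (hf : q.comap f ≤ p) {l : Module.Dual K M} (hl : p ≤ LinearMap.ker l) :
    ∃ l' : Module.Dual K N, q ≤ LinearMap.ker l' ∧ l' ∘ₗ f = l := by
  have hker : LinearMap.ker (q.mkQ ∘ₗ f) ≤ LinearMap.ker l := by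
    rw [LinearMap.ker_comp, Submodule.ker_mkQ]
    exact hf.trans hl
  obtain ⟨m, hm⟩ : l ∈ LinearMap.range (q.mkQ ∘ₗ f).dualMap := by
    rw [LinearMap.range_dualMap_eq_dualAnnihilator_ker, Submodule.mem_dualAnnihilator]
    exact fun x hx => hker hx
  refine ⟨m ∘ₗ q.mkQ, fun x hx => ?_, hm⟩
  simp [(Submodule.Quotient.mk_eq_zero q).mpr hx]

theorem LinearMap.exists_comp_eq_of_surjective {R M N P : Type*} [Ring R] [AddCommGroup M]
    [Module R M] [AddCommGroup N] [Module R N] [AddCommGroup P] [Module R P] {f : M →ₗ[R] N}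
    (hf : Function.Surjective f) {g : M →ₗ[R] P} (hg : LinearMap.ker f ≤ LinearMap.ker g) :
    ∃ h : N →ₗ[R] P, h ∘ₗ f = g :=
  ⟨(LinearMap.ker f).liftQ g hg ∘ₗ (f.quotKerEquivOfSurjective hf).symm, by ext; simp⟩

section DualPull

variable {U' : Submodule ℝ U} {V' : Submodule ℝ V} {W' : Submodule ℝ W}
  {φ : U →ₗ[ℝ] V} (hφH : ∀ (c : ℍ) (u : U), φ (c • u) = c • φ u) (hφ' : ∀ u ∈ U', φ u ∈ V')
  {ψ : V →ₗ[ℝ] W} (hψH : ∀ (c : ℍ) (v : V), ψ (c • v) = c • ψ v) (hψ' : ∀ v ∈ V', ψ v ∈ W')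

@[simp] theorem dualPull_apply_apply (γ : AHDual W') (v : V) :
    (dualPull V' W' ψ hψH hψ' γ : V →ₗ[ℝ] ℍ) v = (γ : W →ₗ[ℝ] ℍ) (ψ v) := rfl

theorem dualPull_injective (hψ : Function.Surjective ψ) :
    Function.Injective (dualPull V' W' ψ hψH hψ') := fun _ _ h =>
  Subtype.ext <| (LinearMap.cancel_right hψ).mp <| congrArg Subtype.val h

theorem dualPull_surjective (hV : IsAH V') (hφV' : V'.comap φ ≤ U') :
    Function.Surjective (dualPull U' V' φ hφH hφ') := by
  have := hV.isScalarTower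
  intro α
  obtain ⟨g, hgV', hgφ⟩ := Module.Dual.exists_comp_eq_of_comap_le hφV'
    (l := QuaternionAlgebra.reₗ _ _ _ ∘ₗ (α : U →ₗ[ℝ] ℍ)) α.2.2
  refine ⟨⟨quatExtend g, quatExtend_mem_AHDual hgV'⟩, AHDual.ext_re fun u => ?_⟩
  rw [dualPull_apply_apply, re_quatExtend]
  exact LinearMap.congr_fun hgφ u

theorem dualPull_comp_dualPull (hψφ : ψ ∘ₗ φ = 0) :
    dualPull U' V' φ hφH hφ' ∘ₗ dualPull V' W' ψ hψH hψ' = 0 :=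
  LinearMap.ext fun γ => Subtype.ext <| LinearMap.ext fun u => by
    simpa using congrArg (γ : W →ₗ[ℝ] ℍ) (LinearMap.congr_fun hψφ u)

theorem ker_dualPull_le_range_dualPull (hψ : Function.Surjective ψ)
    (hψV' : ∀ w ∈ W', ∃ v ∈ V', ψ v = w) (hexact : LinearMap.ker ψ ≤ LinearMap.range φ) :
    LinearMap.ker (dualPull U' V' φ hφH hφ') ≤ LinearMap.range (dualPull V' W' ψ hψH hψ') := by
  intro β hβ
  have hβφ : (β : V →ₗ[ℝ] ℍ) ∘ₗ φ = 0 := congrArg Subtype.val hβ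
  obtain ⟨γ, hγ⟩ := LinearMap.exists_comp_eq_of_surjective hψ (g := (β : V →ₗ[ℝ] ℍ))
    fun v hv => by
      obtain ⟨u, rfl⟩ := hexact hv
      exact LinearMap.congr_fun hβφ u
  have hγψ (v : V) : γ (ψ v) = (β : V →ₗ[ℝ] ℍ) v := LinearMap.congr_fun hγ v
  have hγH (c : ℍ) (w : W) : γ (c • w) = c * γ w := by
    obtain ⟨v, rfl⟩ := hψ w
    rw [← hψH, hγψ, hγψ, β.2.1]
  have hγW' (w : W) (hw : w ∈ W') : (γ w).re = 0 := by
    obtain ⟨v, hv, rfl⟩ := hψV' w hw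
    rw [hγψ]
    exact β.2.2 v hv
  exact ⟨⟨γ, hγH, hγW'⟩, Subtype.ext hγ⟩

end DualPull
theorem dual_sequence_exact_general
    (U' : Submodule ℝ U) (V' : Submodule ℝ V) (W' : Submodule ℝ W)
    (hV : IsAH V')
    (φ : U →ₗ[ℝ] V) (hφH : ∀ (c : ℍ) (u : U), φ (c • u) = c • φ u)
    (hφ' : ∀ u ∈ U', φ u ∈ V')
    (ψ : V →ₗ[ℝ] W) (hψH : ∀ (c : ℍ) (v : V), ψ (c • v) = c • ψ v)
    (hψ' : ∀ v ∈ V', ψ v ∈ W')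
    (hφinj : Function.Injective φ) (hψsurj : Function.Surjective ψ)
    (hexact : LinearMap.range φ = LinearMap.ker ψ)
    (hψ'surj : ∀ w ∈ W', ∃ v ∈ V', ψ v = w)
    (hexact' : ∀ v ∈ V', ψ v = 0 → ∃ u ∈ U', φ u = v) :
    Function.Injective (dualPull V' W' ψ hψH hψ') ∧
    Function.Surjective (dualPull U' V' φ hφH hφ') ∧
    LinearMap.range (dualPull V' W' ψ hψH hψ')
      = LinearMap.ker (dualPull U' V' φ hφH hφ') := by
  have hψφ : ψ ∘ₗ φ = 0 := LinearMap.range_le_ker_iff.mp hexact.le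
  have hφV' : V'.comap φ ≤ U' := fun u hu => by
    obtain ⟨u', hu', hφu'⟩ := hexact' (φ u) hu (LinearMap.congr_fun hψφ u)
    exact hφinj hφu' ▸ hu'
  refine ⟨dualPull_injective hψH hψ' hψsurj, dualPull_surjective hφH hφ' hV hφV',
    le_antisymm ?_ (ker_dualPull_le_range_dualPull hφH hφ' hψH hψ' hψsurj hψ'surj hexact.ge)⟩
  exact LinearMap.range_le_ker_iff.mpr (dualPull_comp_dualPull hφH hφ' hψH hψ' hψφ)

/-- If `0 → U → V → W → 0` is an AH-exact sequence of finite-dimensional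
AH-modules, then the dual sequence `0 → W^† → V^† → U^† → 0` is exact. -/
theorem dual_sequence_exact
    (U' : Submodule ℝ U) (V' : Submodule ℝ V) (W' : Submodule ℝ W)
    [FiniteDimensional ℝ U] [FiniteDimensional ℝ V] [FiniteDimensional ℝ W]
    (hU : IsAH U') (hV : IsAH V') (hW : IsAH W')
    (φ : U →ₗ[ℝ] V) (hφH : ∀ (c : ℍ) (u : U), φ (c • u) = c • φ u)
    (hφ' : ∀ u ∈ U', φ u ∈ V')
    (ψ : V →ₗ[ℝ] W) (hψH : ∀ (c : ℍ) (v : V), ψ (c • v) = c • ψ v)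
    (hψ' : ∀ v ∈ V', ψ v ∈ W')
    (hφinj : Function.Injective φ) (hψsurj : Function.Surjective ψ)
    (hexact : LinearMap.range φ = LinearMap.ker ψ)
    (hψ'surj : ∀ w ∈ W', ∃ v ∈ V', ψ v = w)
    (hexact' : ∀ v ∈ V', ψ v = 0 → ∃ u ∈ U', φ u = v) :
    Function.Injective (dualPull V' W' ψ hψH hψ') ∧
    Function.Surjective (dualPull U' V' φ hφH hφ') ∧
    LinearMap.range (dualPull V' W' ψ hψH hψ')
      = LinearMap.ker (dualPull U' V' φ hφH hφ') :=
  dual_sequence_exact_general U' V' W' hV φ hφH hφ' ψ hψH hψ' hφinj hψsurj hexact hψ'surj hexact'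

end
end
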